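/- With b_alpha as above and alpha in (-1/4, 1), the zero set of b_alpha in R^2 is exactly the three points (0,0), (1,0), and (-1,0). -/
import Mathlib


noncomputable def Hfun (x : ℝ × ℝ) : ℝ := x.2 ^ 2 / 2 + x.1 ^ 4 / 4 - x.1 ^ 2 / 2

noncomputable def bAlpha (α : ℝ) (x : ℝ × ℝ) : ℝ × ℝ :=
  (-x.2, x.1 ^ 3 - x.1) - (Hfun x - α) • (x.1 ^ 3 - x.1, x.2)

theorem zero_set_bAlpha (α : ℝ) (hα : α ∈ Set.Ioo (-(1 / 4) : ℝ) 1) :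
    {x : ℝ × ℝ | bAlpha α x = 0} =
      {((0 : ℝ), (0 : ℝ)), ((1 : ℝ), (0 : ℝ)), ((-1 : ℝ), (0 : ℝ))} := by
  ext ⟨x, y⟩
  simp only [Set.mem_setOf_eq, bAlpha, Hfun, Prod.smul_mk, smul_eq_mul, Prod.mk_sub_mk,
    Prod.mk_eq_zero, Set.mem_insert_iff, Set.mem_singleton_iff, Prod.mk.injEq]
  constructor
  · rintro ⟨h1, h2⟩
    set c : ℝ := y ^ 2 / 2 + x ^ 4 / 4 - x ^ 2 / 2 - α with hc
    have h3 : y * (1 + c ^ 2) = 0 := by linear_combination -h1 - c * h2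
    have hy : y = 0 := (mul_eq_zero.mp h3).resolve_right
      (by positivity : (0:ℝ) < 1 + c ^ 2).ne'
    have hx' : x ^ 3 - x = 0 := by
      have := h2
      rw [hy] at this
      linarith [this]
    have : x * ((x - 1) * (x + 1)) = 0 := by linear_combination hx'
    rcases mul_eq_zero.mp this with h | h
    · exact Or.inl ⟨h, hy⟩
    · rcases mul_eq_zero.mp h with h | h
      · exact Or.inr (Or.inl ⟨by linarith, hy⟩)
      · exact Or.inr (Or.inr ⟨by linarith, hy⟩)
  · rintro (⟨hx, hy⟩ | ⟨hx, hy⟩ | ⟨hx, hy⟩) <;> subst hx <;> subst hy <;> norm_num
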